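/- arXiv:math/0603330 — 4 statements merged into one kernel-verified Lean document; each statement's English description precedes it below -/
import Mathlib

section
/- If F is a distribution function on ℝ in the class L_γ for some γ > 0 (i.e. F̄(x) > 0 for all x and F̄(x−k)/F̄(x) → e^{γk} as x → ∞ for every fixed k), and if the moment generating function φ_F(γ) = E[e^{γX}] is finite, then F̄(x) = o(e^{−γx}) as x → ∞. -/
/-!
Since `x ↦ e^{γx}` is increasing, `e^{γx} F̄(x) ≤ ∫_{(x,∞)} e^{γt} dF(t)`, and the right-hand
side is the tail of the convergent integral `φ_F(γ)`, hence tends to `0`.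
-/

open MeasureTheory Filter Set

/-- The tail distribution function of a probability measure on ℝ. -/
noncomputable def tail (μ : Measure ℝ) (x : ℝ) : ℝ := (μ (Set.Ioi x)).toReal

/-- The exponential moment `φ_F(α) = ∫ e^{αx} dF(x)`, valued in `[0,∞]`. -/
noncomputable def expMoment (μ : Measure ℝ) (α : ℝ) : ENNReal :=
  ∫⁻ x, ENNReal.ofReal (Real.exp (α * x)) ∂μ

/-- The class `L_γ`: positive tail, and `F̄(x-k)/F̄(x) → e^{γ k}` for every fixed `k`. -/
def MemL (μ : Measure ℝ) (γ : ℝ) : Prop :=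
  (∀ x, 0 < tail μ x) ∧
  ∀ k : ℝ, Tendsto (fun x => tail μ (x - k) / tail μ x) atTop (nhds (Real.exp (γ * k)))

open Topology

section TailIntegral

variable {α : Type*} [LinearOrder α] [MeasurableSpace α] [TopologicalSpace α]
  [OrderClosedTopology α] [OpensMeasurableSpace α] {μ : Measure α} {f : α → ENNReal}

theorem mul_measure_Ioi_le_setLIntegral (hf : Monotone f) (x : α) :
    f x * μ (Ioi x) ≤ ∫⁻ t in Ioi x, f t ∂μ := by
  rw [← setLIntegral_const]
  exact setLIntegral_mono' measurableSet_Ioi fun t ht => hf (le_of_lt ht)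

theorem tendsto_setLIntegral_Ioi_atTop_zero [Nonempty α] [NoMaxOrder α]
    [(atTop : Filter α).IsCountablyGenerated] (hf : ∫⁻ t, f t ∂μ ≠ ⊤) :
    Tendsto (fun x => ∫⁻ t in Ioi x, f t ∂μ) atTop (𝓝 0) := by
  have hfinite : ∃ x, μ.withDensity f (Ioi x) ≠ ⊤ := by
    refine ⟨Classical.arbitrary α, ne_top_of_le_ne_top hf ?_⟩
    rw [withDensity_apply f measurableSet_Ioi]
    exact setLIntegral_le_lintegral _ _
  have hempty : ⋂ x : α, Ioi x = ∅ := iInter_eq_empty_iff.2 fun x => ⟨x, lt_irrefl x⟩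
  have h := tendsto_measure_iInter_atTop (fun x => measurableSet_Ioi.nullMeasurableSet)
    antitone_Ioi hfinite
  rw [hempty, measure_empty] at h
  simpa only [Function.comp_def, withDensity_apply f measurableSet_Ioi] using h

theorem tendsto_mul_measure_Ioi_atTop_zero [Nonempty α] [NoMaxOrder α]
    [(atTop : Filter α).IsCountablyGenerated] (hf_mono : Monotone f)
    (hf : ∫⁻ t, f t ∂μ ≠ ⊤) :
    Tendsto (fun x => f x * μ (Ioi x)) atTop (𝓝 0) :=
  tendsto_of_tendsto_of_tendsto_of_le_of_le tendsto_const_nhds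
    (tendsto_setLIntegral_Ioi_atTop_zero hf) (fun _ => bot_le)
    (mul_measure_Ioi_le_setLIntegral hf_mono)

end TailIntegral

theorem tail_div_exp_neg_mul (μ : Measure ℝ) (γ x : ℝ) :
    tail μ x / Real.exp (-γ * x) = (ENNReal.ofReal (Real.exp (γ * x)) * μ (Ioi x)).toReal := by
  rw [ENNReal.toReal_mul, ENNReal.toReal_ofReal (Real.exp_pos _).le, tail, neg_mul, Real.exp_neg,
    div_inv_eq_mul, mul_comm]

theorem tail_littleO_exp_general (μ : Measure ℝ) (γ : ℝ) (hγ : 0 < γ)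
    (hφ : expMoment μ γ < ⊤) :
    (fun x => tail μ x) =o[atTop] fun x => Real.exp (-γ * x) := by
  have hmono : Monotone fun t => ENNReal.ofReal (Real.exp (γ * t)) :=
    ENNReal.ofReal_mono.comp (Real.exp_monotone.comp (monotone_id.const_mul hγ.le))
  rw [Asymptotics.isLittleO_iff_tendsto fun x hx => absurd hx (Real.exp_pos _).ne']
  simp only [tail_div_exp_neg_mul]
  exact (ENNReal.tendsto_toReal ENNReal.zero_ne_top).comp
    (tendsto_mul_measure_Ioi_atTop_zero hmono hφ.ne)

theorem tail_littleO_exp (μ : Measure ℝ) [IsProbabilityMeasure μ] (γ : ℝ) (hγ : 0 < γ)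
    (hL : MemL μ γ) (hφ : expMoment μ γ < ⊤) :
    (fun x => tail μ x) =o[atTop] fun x => Real.exp (-γ * x) :=
  tail_littleO_exp_general μ γ hγ hφ
end

section
/- If F ∈ L_γ for some γ > 0, then γ = sup{α : φ_F(α) < ∞}, i.e. the exponential moment index of F is uniquely determined by the tail-decay parameter γ. -/
open MeasureTheory Filter Set

lemma tail_ofReal (μ : Measure ℝ) [IsProbabilityMeasure μ] (x : ℝ) :
    ENNReal.ofReal (tail μ x) = μ (Set.Ioi x) := by
  rw [tail, ENNReal.ofReal_toReal (measure_ne_top μ _)]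

lemma tail_bounds (μ : Measure ℝ) (γ ε : ℝ) (hε : 0 < ε) (hL : MemL μ γ) :
    ∃ N : ℝ, ∀ n : ℕ,
      tail μ (N + n) ≤ tail μ N * Real.exp (-(γ - ε) * n) ∧
      tail μ N * Real.exp (-(γ + ε) * n) ≤ tail μ (N + n) := by
  have h1 : Real.exp (γ - ε) < Real.exp (γ * 1) := by
    rw [mul_one]; exact Real.exp_lt_exp.2 (by linarith)
  have h2 : Real.exp (γ * 1) < Real.exp (γ + ε) := Real.exp_lt_exp.2 (by linarith)
  have hev := (hL.2 1).eventually (Ioo_mem_nhds h1 h2)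
  rw [eventually_atTop] at hev
  obtain ⟨N, hN⟩ := hev
  refine ⟨N, fun n => ?_⟩
  induction n with
  | zero => simp
  | succ n ih =>
    have hx : N ≤ N + (n + 1 : ℕ) := by push_cast; linarith [Nat.cast_nonneg (α := ℝ) n]
    have hmem := hN _ hx
    have hxx : (N + ((n : ℕ) + 1 : ℕ) : ℝ) - 1 = N + n := by push_cast; ring
    rw [hxx] at hmem
    obtain ⟨hlo, hhi⟩ := hmem
    have hTpos : 0 < tail μ (N + ((n + 1 : ℕ) : ℝ)) := hL.1 _
    have hTpos' : 0 < tail μ (N + (n : ℕ)) := hL.1 _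
    constructor
    · -- upper
      have h3 : Real.exp (γ - ε) * tail μ (N + ((n + 1 : ℕ) : ℝ)) < tail μ (N + (n : ℕ)) :=
        (lt_div_iff₀ hTpos).1 hlo
      have hprod : Real.exp (-(γ - ε)) * Real.exp (γ - ε) = 1 := by
        rw [← Real.exp_add, show -(γ - ε) + (γ - ε) = 0 by ring, Real.exp_zero]
      have h4 : tail μ (N + ((n + 1 : ℕ) : ℝ)) ≤ tail μ (N + (n : ℕ)) * Real.exp (-(γ - ε)) := by
        have hm := mul_le_mul_of_nonneg_left h3.le (Real.exp_pos (-(γ - ε))).le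
        nlinarith
      calc tail μ (N + ((n + 1 : ℕ) : ℝ)) ≤ tail μ (N + (n : ℕ)) * Real.exp (-(γ - ε)) := h4
        _ ≤ tail μ N * Real.exp (-(γ - ε) * n) * Real.exp (-(γ - ε)) := by
            have := ih.1
            nlinarith [Real.exp_pos (-(γ - ε))]
        _ = tail μ N * Real.exp (-(γ - ε) * ((n + 1 : ℕ) : ℝ)) := by
            push_cast
            rw [mul_assoc, ← Real.exp_add, show -(γ - ε) * (n : ℝ) + -(γ - ε) = -(γ - ε) * ((n : ℝ) + 1) by ring]
    · -- lower
      have h3 : tail μ (N + (n : ℕ)) < Real.exp (γ + ε) * tail μ (N + ((n + 1 : ℕ) : ℝ)) := by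
        have := (div_lt_iff₀ hTpos).1 hhi
        linarith
      have hprod : Real.exp (-(γ + ε)) * Real.exp (γ + ε) = 1 := by
        rw [← Real.exp_add, show -(γ + ε) + (γ + ε) = 0 by ring, Real.exp_zero]
      have h4 : tail μ (N + (n : ℕ)) * Real.exp (-(γ + ε)) ≤ tail μ (N + ((n + 1 : ℕ) : ℝ)) := by
        have hm := mul_le_mul_of_nonneg_left h3.le (Real.exp_pos (-(γ + ε))).le
        nlinarith
      calc tail μ N * Real.exp (-(γ + ε) * ((n + 1 : ℕ) : ℝ))
          = tail μ N * Real.exp (-(γ + ε) * n) * Real.exp (-(γ + ε)) := by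
            push_cast
            rw [mul_assoc, ← Real.exp_add, show -(γ + ε) * (n : ℝ) + -(γ + ε) = -(γ + ε) * ((n : ℝ) + 1) by ring]
        _ ≤ tail μ (N + (n : ℕ)) * Real.exp (-(γ + ε)) := by
            have := ih.2
            nlinarith [Real.exp_pos (-(γ + ε))]
        _ ≤ tail μ (N + ((n + 1 : ℕ) : ℝ)) := h4

lemma expMoment_eq_top (μ : Measure ℝ) [IsProbabilityMeasure μ] (γ α : ℝ)
    (hγ : 0 < γ) (hαγ : γ < α) (hL : MemL μ γ) : expMoment μ α = ⊤ := by
  by_contra hfin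
  have hfin' : expMoment μ α < ⊤ := lt_top_iff_ne_top.2 hfin
  set ε := (α - γ) / 2 with hεdef
  have hε : 0 < ε := by rw [hεdef]; linarith
  obtain ⟨N, hN⟩ := tail_bounds μ γ ε hε hL
  have hα : 0 < α := lt_trans hγ hαγ
  -- lower bound on the moment by each point
  have key : ∀ x : ℝ, ENNReal.ofReal (Real.exp (α * x)) * μ (Set.Ioi x) ≤ expMoment μ α := by
    intro x
    have hmono : ∫⁻ y in Set.Ioi x, ENNReal.ofReal (Real.exp (α * x)) ∂μ
        ≤ ∫⁻ y in Set.Ioi x, ENNReal.ofReal (Real.exp (α * y)) ∂μ := by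
      have hm : Measurable fun y : ℝ => ENNReal.ofReal (Real.exp (α * y)) :=
        (Real.measurable_exp.comp (measurable_id.const_mul α)).ennreal_ofReal
      refine setLIntegral_mono hm (fun y hy => ?_)
      exact ENNReal.ofReal_le_ofReal (Real.exp_le_exp.2
        (mul_le_mul_of_nonneg_left (le_of_lt hy) hα.le))
    calc ENNReal.ofReal (Real.exp (α * x)) * μ (Set.Ioi x)
        = ∫⁻ _ in Set.Ioi x, ENNReal.ofReal (Real.exp (α * x)) ∂μ := by
          rw [setLIntegral_const]
      _ ≤ ∫⁻ y in Set.Ioi x, ENNReal.ofReal (Real.exp (α * y)) ∂μ := hmono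
      _ ≤ expMoment μ α := setLIntegral_le_lintegral _ _
  set C := (expMoment μ α).toReal with hC
  have hCb : ∀ x : ℝ, Real.exp (α * x) * tail μ x ≤ C := by
    intro x
    have h1 := key x
    rw [← tail_ofReal μ x, ← ENNReal.ofReal_mul (Real.exp_pos _).le] at h1
    exact (ENNReal.ofReal_le_iff_le_toReal hfin).1 h1
  have hC0 : 0 ≤ C := ENNReal.toReal_nonneg
  have hTN : 0 < tail μ N := hL.1 N
  have hpos : 0 < tail μ N * Real.exp (α * N) := mul_pos hTN (Real.exp_pos _)
  obtain ⟨n, hn⟩ := exists_nat_gt (Real.log ((C + 1) / (tail μ N * Real.exp (α * N))) / ε)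
  have hq : 0 < (C + 1) / (tail μ N * Real.exp (α * N)) := by positivity
  have h1 : (C + 1) / (tail μ N * Real.exp (α * N)) < Real.exp (ε * n) := by
    rw [← Real.exp_log hq]
    exact Real.exp_lt_exp.2 (by rw [div_lt_iff₀ hε] at hn; linarith)
  have h2 : C + 1 < tail μ N * Real.exp (α * N) * Real.exp (ε * n) := by
    rw [div_lt_iff₀ hpos] at h1; linarith [h1]
  have h3 : tail μ N * Real.exp (α * N) * Real.exp (ε * n)
      ≤ Real.exp (α * (N + n)) * tail μ (N + n) := by
    have hlow := (hN n).2
    have hexp : Real.exp (α * N) * Real.exp (ε * n)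
        = Real.exp (α * (N + n)) * Real.exp (-(γ + ε) * n) := by
      rw [← Real.exp_add, ← Real.exp_add]
      congr 1
      rw [hεdef]; ring
    calc tail μ N * Real.exp (α * N) * Real.exp (ε * n)
        = Real.exp (α * (N + n)) * (tail μ N * Real.exp (-(γ + ε) * n)) := by
          rw [mul_assoc, hexp]; ring
      _ ≤ Real.exp (α * (N + n)) * tail μ (N + n) :=
          mul_le_mul_of_nonneg_left hlow (Real.exp_pos _).le
  linarith [hCb (N + n), h2, h3]

lemma expMoment_lt_top (μ : Measure ℝ) [IsProbabilityMeasure μ] (γ α : ℝ)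
    (hγ : 0 < γ) (hα0 : 0 < α) (hαγ : α < γ) (hL : MemL μ γ) : expMoment μ α < ⊤ := by
  set ε := (γ - α) / 2 with hεdef
  have hε : 0 < ε := by rw [hεdef]; linarith
  have hαε : α < γ - ε := by rw [hεdef]; linarith
  obtain ⟨N, hN⟩ := tail_bounds μ γ ε hε hL
  set g : ℝ → ENNReal := fun y => ENNReal.ofReal (Real.exp (α * N)) +
      ∑' n : ℕ, (Set.Ioi (N + (n : ℝ))).indicator
        (fun _ => ENNReal.ofReal (Real.exp (α * (N + n + 1)))) y with hg
  have hpt : ∀ y : ℝ, ENNReal.ofReal (Real.exp (α * y)) ≤ g y := by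
    intro y
    rcases le_or_gt y N with h | h
    · calc ENNReal.ofReal (Real.exp (α * y)) ≤ ENNReal.ofReal (Real.exp (α * N)) := by
            exact ENNReal.ofReal_le_ofReal (Real.exp_le_exp.2 (mul_le_mul_of_nonneg_left h hα0.le))
        _ ≤ g y := le_self_add
    · set n := ⌈y - N⌉₊ - 1 with hn
      have h1 : 0 < y - N := sub_pos.2 h
      have hceil : 1 ≤ ⌈y - N⌉₊ := Nat.one_le_ceil_iff.2 h1
      have hn1 : (n : ℝ) < y - N := by
        have : n < ⌈y - N⌉₊ := by omega
        exact Nat.lt_ceil.1 this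
      have hn2 : y - N ≤ (n : ℝ) + 1 := by
        have heq : ⌈y - N⌉₊ = n + 1 := by omega
        calc y - N ≤ (⌈y - N⌉₊ : ℝ) := Nat.le_ceil _
          _ = (n : ℝ) + 1 := by rw [heq]; push_cast; ring
      have hmem : y ∈ Set.Ioi (N + (n : ℝ)) := by
        simp only [Set.mem_Ioi]; linarith
      calc ENNReal.ofReal (Real.exp (α * y))
          ≤ ENNReal.ofReal (Real.exp (α * (N + n + 1))) :=
            ENNReal.ofReal_le_ofReal (Real.exp_le_exp.2
              (mul_le_mul_of_nonneg_left (by linarith) hα0.le))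
        _ = (Set.Ioi (N + (n : ℝ))).indicator
              (fun _ => ENNReal.ofReal (Real.exp (α * (N + n + 1)))) y := by
            rw [Set.indicator_of_mem hmem]
        _ ≤ ∑' m : ℕ, (Set.Ioi (N + (m : ℝ))).indicator
              (fun _ => ENNReal.ofReal (Real.exp (α * (N + m + 1)))) y := ENNReal.le_tsum n
        _ ≤ g y := le_add_self
  have hmeas : ∀ n : ℕ, Measurable ((Set.Ioi (N + (n : ℝ))).indicator
      (fun _ : ℝ => ENNReal.ofReal (Real.exp (α * (N + n + 1))))) :=
    fun n => measurable_const.indicator measurableSet_Ioi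
  have hint : ∫⁻ y, g y ∂μ = ENNReal.ofReal (Real.exp (α * N)) +
      ∑' n : ℕ, ENNReal.ofReal (Real.exp (α * (N + n + 1))) * μ (Set.Ioi (N + (n : ℝ))) := by
    rw [hg]
    simp only
    rw [lintegral_add_left measurable_const, lintegral_const, measure_univ, mul_one,
      lintegral_tsum (fun n => (hmeas n).aemeasurable)]
    congr 1
    refine tsum_congr (fun n => ?_)
    rw [lintegral_indicator measurableSet_Ioi, setLIntegral_const]
  set r := Real.exp (α - (γ - ε)) with hr
  have hr0 : 0 ≤ r := (Real.exp_pos _).le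
  have hr1 : ENNReal.ofReal r < 1 := by
    rw [← ENNReal.ofReal_one]
    exact ENNReal.ofReal_lt_ofReal_iff_of_nonneg hr0 |>.2 (by
      rw [hr, ← Real.exp_zero]
      exact Real.exp_lt_exp.2 (by linarith))
  set c := Real.exp (α * (N + 1)) * tail μ N with hc
  have hterm : ∀ n : ℕ, ENNReal.ofReal (Real.exp (α * (N + n + 1))) * μ (Set.Ioi (N + (n : ℝ)))
      ≤ ENNReal.ofReal c * (ENNReal.ofReal r) ^ n := by
    intro n
    rw [← tail_ofReal μ (N + (n : ℝ)), ← ENNReal.ofReal_mul (Real.exp_pos _).le,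
      ← ENNReal.ofReal_pow hr0,
      ← ENNReal.ofReal_mul (mul_nonneg (Real.exp_pos _).le (hL.1 N).le)]
    refine ENNReal.ofReal_le_ofReal ?_
    have hTb := (hN n).1
    calc Real.exp (α * (N + n + 1)) * tail μ (N + (n : ℝ))
        ≤ Real.exp (α * (N + n + 1)) * (tail μ N * Real.exp (-(γ - ε) * n)) :=
          mul_le_mul_of_nonneg_left hTb (Real.exp_pos _).le
      _ = c * r ^ n := by
          have hee : Real.exp (α * (N + (n : ℝ) + 1)) * Real.exp (-(γ - ε) * n)
              = Real.exp (α * (N + 1)) * Real.exp ((n : ℝ) * (α - (γ - ε))) := by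
            rw [← Real.exp_add, ← Real.exp_add]; congr 1; ring
          calc Real.exp (α * (N + (n : ℝ) + 1)) * (tail μ N * Real.exp (-(γ - ε) * n))
              = Real.exp (α * (N + (n : ℝ) + 1)) * Real.exp (-(γ - ε) * n) * tail μ N := by ring
            _ = Real.exp (α * (N + 1)) * Real.exp ((n : ℝ) * (α - (γ - ε))) * tail μ N := by
                rw [hee]
            _ = c * r ^ n := by rw [hc, hr, ← Real.exp_nat_mul]; ring
  have hsum : ∑' n : ℕ, ENNReal.ofReal (Real.exp (α * (N + n + 1))) * μ (Set.Ioi (N + (n : ℝ)))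
      ≤ ENNReal.ofReal c * (1 - ENNReal.ofReal r)⁻¹ := by
    calc ∑' n : ℕ, ENNReal.ofReal (Real.exp (α * (N + n + 1))) * μ (Set.Ioi (N + (n : ℝ)))
        ≤ ∑' n : ℕ, ENNReal.ofReal c * (ENNReal.ofReal r) ^ n := ENNReal.tsum_le_tsum hterm
      _ = ENNReal.ofReal c * ∑' n : ℕ, (ENNReal.ofReal r) ^ n := ENNReal.tsum_mul_left
      _ = ENNReal.ofReal c * (1 - ENNReal.ofReal r)⁻¹ := by rw [ENNReal.tsum_geometric]
  have hfin : ENNReal.ofReal c * (1 - ENNReal.ofReal r)⁻¹ < ⊤ := by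
    refine ENNReal.mul_lt_top ENNReal.ofReal_lt_top ?_
    rw [lt_top_iff_ne_top, ne_eq, ENNReal.inv_eq_top]
    intro hcontra
    have : (1 : ENNReal) ≤ ENNReal.ofReal r := by
      have := tsub_eq_zero_iff_le.1 hcontra
      exact this
    exact absurd hr1 (not_lt.2 this)
  calc expMoment μ α ≤ ∫⁻ y, g y ∂μ := lintegral_mono hpt
    _ = _ := hint
    _ < ⊤ := ENNReal.add_lt_top.2 ⟨ENNReal.ofReal_lt_top, lt_of_le_of_lt hsum hfin⟩

theorem memL_eq_sSup_expMoment (μ : Measure ℝ) [IsProbabilityMeasure μ] (γ : ℝ)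
    (hγ : 0 < γ) (hL : MemL μ γ) :
    γ = sSup {α : ℝ | expMoment μ α < ⊤} := by
  set S := {α : ℝ | expMoment μ α < ⊤} with hS
  have hmem : ∀ α, 0 < α → α < γ → α ∈ S := fun α h1 h2 =>
    expMoment_lt_top μ γ α hγ h1 h2 hL
  have hub : ∀ α ∈ S, α ≤ γ := by
    intro α hα
    by_contra h
    push_neg at h
    rw [hS, Set.mem_setOf_eq, expMoment_eq_top μ γ α hγ h hL] at hα
    exact absurd hα (lt_irrefl _)
  have hne : S.Nonempty := ⟨γ / 2, hmem _ (by linarith) (by linarith)⟩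
  have hbdd : BddAbove S := ⟨γ, hub⟩
  refine le_antisymm ?_ (csSup_le hne hub)
  refine le_of_forall_lt (fun c hc => ?_)
  have hm : max c 0 < γ := max_lt hc hγ
  have hm0 : 0 ≤ max c 0 := le_max_right c 0
  set β := (max c 0 + γ) / 2 with hβ
  have h1 : c < β := lt_of_le_of_lt (le_max_left c 0) (by rw [hβ]; linarith)
  have h2 : 0 < β := by rw [hβ]; linarith
  have h3 : β < γ := by rw [hβ]; linarith
  exact lt_of_lt_of_le h1 (le_csSup hbdd (hmem β h2 h3))
end

section
/- Let ξ₁, ξ₂, … be i.i.d. with distribution F ∈ L_γ for some γ > 0 and φ_F(γ) < 1, and let M = sup_{n≥0} S_n where S_n are the partial sums. Then P(M > x) = o(e^{−γx}) as x → ∞. -/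
/-!
As `M` is the supremum of the `Sₙ`, `e^{γM} ≤ ∑ₙ e^{γSₙ}`, and by independence
`E e^{γSₙ} = φ_F(γ)ⁿ`, so `E e^{γM} ≤ (1 - φ_F(γ))⁻¹ < ∞`. Bounding `e^{γx}` by `e^{γM}` on
`{M > x}` then gives `e^{γx} P(M > x) ≤ E[e^{γM}; M > x] → 0`.
-/

open MeasureTheory Filter Set

open ENNReal Topology

/- No boundedness is assumed: for unbounded `s` the junk value `⨆ i, s i = 0` still lies below
some `s i`. -/
theorem Monotone.map_ciSup_le_iSup {β : Type*} [CompleteLattice β] [TopologicalSpace β]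
    [OrderClosedTopology β] {f : ℝ → β} (hf : Monotone f) (hc : Continuous f)
    {ι : Type*} [Nonempty ι] (s : ι → ℝ) : f (⨆ i, s i) ≤ ⨆ i, f (s i) := by
  refine _root_.le_of_tendsto
    ((hc.tendsto (⨆ i, s i)).mono_left (nhdsWithin_le_nhds (s := Iio (⨆ i, s i))))
    (eventually_nhdsWithin_of_forall fun y hy => ?_)
  obtain ⟨i, hi⟩ := exists_lt_of_lt_ciSup (mem_Iio.mp hy)
  exact (hf hi.le).trans (le_iSup (fun i => f (s i)) i)

theorem ofReal_exp_mul_ciSup_le_tsum {γ : ℝ} (hγ : 0 ≤ γ) {ι : Type*} [Nonempty ι]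
    (s : ι → ℝ) :
    ENNReal.ofReal (Real.exp (γ * ⨆ i, s i)) ≤ ∑' i, ENNReal.ofReal (Real.exp (γ * s i)) := by
  have hmono : Monotone fun y => ENNReal.ofReal (Real.exp (γ * y)) := fun y z hyz =>
    ENNReal.ofReal_le_ofReal (Real.exp_le_exp.mpr (mul_le_mul_of_nonneg_left hyz hγ))
  have hcont : Continuous fun y => ENNReal.ofReal (Real.exp (γ * y)) :=
    ENNReal.continuous_ofReal.comp (by fun_prop)
  exact (hmono.map_ciSup_le_iSup hcont s).trans (iSup_le ENNReal.le_tsum)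

section

variable {Ω : Type*} [MeasurableSpace Ω] {P : Measure Ω}

theorem ofReal_exp_mul_measure_lt_le_withDensity {X : Ω → ℝ} (hX : Measurable X) {γ : ℝ}
    (hγ : 0 ≤ γ) (x : ℝ) :
    ENNReal.ofReal (Real.exp (γ * x)) * P {ω | x < X ω} ≤
      P.withDensity (fun ω => ENNReal.ofReal (Real.exp (γ * X ω))) {ω | x < X ω} := by
  have hs : MeasurableSet {ω | x < X ω} := measurableSet_lt measurable_const hX
  rw [withDensity_apply _ hs, ← setLIntegral_const]
  refine setLIntegral_mono (by fun_prop) fun ω hω => ?_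
  exact ENNReal.ofReal_le_ofReal (Real.exp_le_exp.mpr (mul_le_mul_of_nonneg_left hω.le hγ))

theorem tendsto_measure_setOf_lt_atTop_zero [IsFiniteMeasure P] {X : Ω → ℝ}
    (hX : Measurable X) :
    Tendsto (fun x : ℝ => P {ω | x < X ω}) atTop (𝓝 0) := by
  have hempty : ⋂ x : ℝ, {ω | x < X ω} = ∅ :=
    iInter_eq_empty_iff.mpr fun ω => ⟨X ω, lt_irrefl (X ω)⟩
  have := tendsto_measure_iInter_atTop (μ := P)
    (fun x => (measurableSet_lt measurable_const hX).nullMeasurableSet)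
    (fun x y hxy ω (hω : y < X ω) => hxy.trans_lt hω) ⟨0, measure_ne_top P _⟩
  rwa [hempty, measure_empty] at this

theorem measure_lt_isLittleO_exp_of_lintegral_exp_ne_top {X : Ω → ℝ} (hX : Measurable X)
    {γ : ℝ} (hγ : 0 ≤ γ) (hint : ∫⁻ ω, ENNReal.ofReal (Real.exp (γ * X ω)) ∂P ≠ ⊤) :
    (fun x => (P {ω | x < X ω}).toReal) =o[atTop] fun x => Real.exp (-γ * x) := by
  set ν := P.withDensity fun ω => ENNReal.ofReal (Real.exp (γ * X ω))
  have : IsFiniteMeasure ν := isFiniteMeasure_withDensity hint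
  have hν : Tendsto (fun x : ℝ => (ν {ω | x < X ω}).toReal) atTop (𝓝 0) :=
    (ENNReal.tendsto_toReal zero_ne_top).comp (tendsto_measure_setOf_lt_atTop_zero hX)
  rw [Asymptotics.isLittleO_iff_tendsto fun x hx => absurd hx (Real.exp_ne_zero _)]
  refine tendsto_of_tendsto_of_tendsto_of_le_of_le tendsto_const_nhds hν
    (fun x => div_nonneg toReal_nonneg (Real.exp_pos _).le) fun x => ?_
  have hbound := ENNReal.toReal_mono (measure_ne_top ν _)
    (ofReal_exp_mul_measure_lt_le_withDensity hX hγ x)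
  rw [ENNReal.toReal_mul, ENNReal.toReal_ofReal (Real.exp_pos _).le] at hbound
  calc (P {ω | x < X ω}).toReal / Real.exp (-γ * x)
      = Real.exp (γ * x) * (P {ω | x < X ω}).toReal := by
        rw [neg_mul, Real.exp_neg, div_inv_eq_mul, mul_comm]
    _ ≤ _ := hbound

theorem lintegral_exp_mul_sum_eq_expMoment_pow {ι : Type*} {ξ : ι → Ω → ℝ}
    (hmeas : ∀ i, Measurable (ξ i)) (hindep : ProbabilityTheory.iIndepFun ξ P) {μ : Measure ℝ}
    (hdist : ∀ i, P.map (ξ i) = μ) (γ : ℝ) (s : Finset ι) :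
    ∫⁻ ω, ENNReal.ofReal (Real.exp (γ * ∑ i ∈ s, ξ i ω)) ∂P = expMoment μ γ ^ s.card := by
  have hf : Measurable fun x : ℝ => ENNReal.ofReal (Real.exp (γ * x)) := by fun_prop
  have hprod : ∀ ω, ENNReal.ofReal (Real.exp (γ * ∑ i ∈ s, ξ i ω)) =
      ∏ i ∈ s, ENNReal.ofReal (Real.exp (γ * ξ i ω)) := fun ω => by
    rw [Finset.mul_sum, Real.exp_sum,
      ENNReal.ofReal_prod_of_nonneg fun i _ => (Real.exp_pos _).le]
  have hfactor : ∀ i, ∫⁻ ω, ENNReal.ofReal (Real.exp (γ * ξ i ω)) ∂P = expMoment μ γ :=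
    fun i => by rw [expMoment, ← hdist i, lintegral_map hf (hmeas i)]
  simp_rw [hprod]
  rw [ProbabilityTheory.lintegral_prod_eq_prod_lintegral_of_indepFun s
    (fun i ω => ENNReal.ofReal (Real.exp (γ * ξ i ω))) (hindep.comp (fun _ => _) fun _ => hf)
    fun i => hf.comp (hmeas i)]
  simp [hfactor]

end

theorem max_tail_littleO_exp_general {Ω : Type*} [MeasurableSpace Ω]
    (ℙ : Measure Ω)
    (μ : Measure ℝ)
    (ξ : ℕ → Ω → ℝ) (hmeas : ∀ i, Measurable (ξ i))
    (hindep : ProbabilityTheory.iIndepFun ξ ℙ)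
    (hdist : ∀ i, Measure.map (ξ i) ℙ = μ)
    (S : ℕ → Ω → ℝ) (hS : ∀ n ω, S n ω = ∑ i ∈ Finset.range n, ξ i ω)
    (M : Ω → ℝ) (hM : ∀ ω, M ω = ⨆ n, S n ω)
    (γ : ℝ) (hγ : 0 < γ) (hφ : expMoment μ γ < 1) :
    (fun x => (ℙ {ω | x < M ω}).toReal) =o[atTop] fun x => Real.exp (-γ * x) := by
  have hSmeas : ∀ n, Measurable (S n) := fun n => by
    simp_rw [funext (hS n)]; exact Finset.measurable_fun_sum _ fun i _ => hmeas i
  have hMmeas : Measurable M := by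
    simp_rw [funext hM]; exact Measurable.iSup hSmeas
  have hdom : ∀ ω, ENNReal.ofReal (Real.exp (γ * M ω)) ≤
      ∑' n, ENNReal.ofReal (Real.exp (γ * S n ω)) := fun ω =>
    hM ω ▸ ofReal_exp_mul_ciSup_le_tsum hγ.le fun n => S n ω
  have hsum : ∫⁻ ω, ∑' n, ENNReal.ofReal (Real.exp (γ * S n ω)) ∂ℙ = (1 - expMoment μ γ)⁻¹ := by
    rw [lintegral_tsum fun n => by fun_prop]
    simp_rw [hS, lintegral_exp_mul_sum_eq_expMoment_pow hmeas hindep hdist, Finset.card_range,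
      ENNReal.tsum_geometric]
  refine measure_lt_isLittleO_exp_of_lintegral_exp_ne_top hMmeas hγ.le
    (ne_top_of_le_ne_top ?_ (lintegral_mono hdom))
  rw [hsum]
  exact ENNReal.inv_ne_top.mpr (tsub_pos_of_lt hφ).ne'

theorem max_tail_littleO_exp {Ω : Type*} [MeasurableSpace Ω]
    (ℙ : Measure Ω) [IsProbabilityMeasure ℙ]
    (μ : Measure ℝ) [IsProbabilityMeasure μ]
    (ξ : ℕ → Ω → ℝ) (hmeas : ∀ i, Measurable (ξ i))
    (hindep : ProbabilityTheory.iIndepFun ξ ℙ)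
    (hdist : ∀ i, Measure.map (ξ i) ℙ = μ)
    (S : ℕ → Ω → ℝ) (hS : ∀ n ω, S n ω = ∑ i ∈ Finset.range n, ξ i ω)
    (M : Ω → ℝ) (hM : ∀ ω, M ω = ⨆ n, S n ω)
    (γ : ℝ) (hγ : 0 < γ) (hL : MemL μ γ) (hφ : expMoment μ γ < 1) :
    (fun x => (ℙ {ω | x < M ω}).toReal) =o[atTop] fun x => Real.exp (-γ * x) :=
  max_tail_littleO_exp_general ℙ μ ξ hmeas hindep hdist S hS M hM γ hγ hφ
end

section
/- Suppose F ∈ L_γ for some γ > 0. Then for every γ′ ∈ (0, γ) there exists x₀ such that for all x ≥ x₀ and all t ≤ −1, F̄(x − t) ≤ F̄(x) e^{γ′ t}. -/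
open MeasureTheory Filter Set

/-!
Since `F̄(x + h) / F̄(x) → e^{-γh}`, for a rate `c ∈ (γ', γ)` and a step `h > 0` we eventually have
`F̄(x + h) ≤ e^{-ch} F̄(x)`. Iterating along the grid `x + nh` and using monotonicity of `F̄`
between grid points gives `F̄(x + s) ≤ e^{-c(s - h)} F̄(x)` for all `s ≥ 0`. The loss of one step
is absorbed by the gap between `c` and `γ'` once `s ≥ 1` and `h = 1 - γ'/c`.
-/

lemma tail_antitone (μ : Measure ℝ) [IsFiniteMeasure μ] : Antitone (tail μ) :=
  fun _ _ hab => ENNReal.toReal_mono (measure_ne_top μ _) (measure_mono (Ioi_subset_Ioi hab))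

lemma MemL.eventually_tail_add_le {μ : Measure ℝ} {γ h q : ℝ} (hL : MemL μ γ)
    (hq : Real.exp (-(γ * h)) < q) : ∀ᶠ x in atTop, tail μ (x + h) ≤ q * tail μ x := by
  have hlim := hL.2 (-h)
  rw [mul_neg] at hlim
  filter_upwards [hlim.eventually_lt_const hq] with x hx
  rw [sub_neg_eq_add, div_lt_iff₀ (hL.1 x)] at hx
  exact hx.le

lemma le_pow_mul_of_add_le_mul {f : ℝ → ℝ} {x₀ h q : ℝ} (hh : 0 ≤ h) (hq : 0 ≤ q)
    (hstep : ∀ x ≥ x₀, f (x + h) ≤ q * f x) (n : ℕ) :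
    ∀ x ≥ x₀, f (x + n * h) ≤ q ^ n * f x := by
  induction n with
  | zero => simp
  | succ n ih =>
    intro x hx
    calc f (x + (n + 1 : ℕ) * h) = f ((x + h) + n * h) := by push_cast; ring_nf
      _ ≤ q ^ n * f (x + h) := ih (x + h) (by linarith)
      _ ≤ q ^ n * (q * f x) := mul_le_mul_of_nonneg_left (hstep x hx) (pow_nonneg hq n)
      _ = q ^ (n + 1) * f x := by ring

lemma Antitone.le_exp_mul_of_add_le_exp_mul {f : ℝ → ℝ} {x₀ c h : ℝ} (hf : Antitone f)
    (hf0 : ∀ x, 0 ≤ f x) (hc : 0 ≤ c) (hh : 0 < h)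
    (hstep : ∀ x ≥ x₀, f (x + h) ≤ Real.exp (-(c * h)) * f x) :
    ∀ x ≥ x₀, ∀ s ≥ 0, f (x + s) ≤ Real.exp (-(c * (s - h))) * f x := by
  intro x hx s hs
  set n := ⌊s / h⌋₊
  have hn_le : n * h ≤ s := (le_div_iff₀ hh).1 (Nat.floor_le (div_nonneg hs hh.le))
  have hn_gt : s - h < n * h := by
    have := (div_lt_iff₀ hh).1 (Nat.lt_floor_add_one (s / h))
    linarith
  calc f (x + s) ≤ f (x + n * h) := hf (by linarith [hn_le])
    _ ≤ Real.exp (-(c * h)) ^ n * f x :=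
        le_pow_mul_of_add_le_mul hh.le (Real.exp_pos _).le hstep n x hx
    _ = Real.exp (-(c * (n * h))) * f x := by rw [← Real.exp_nat_mul]; ring_nf
    _ ≤ Real.exp (-(c * (s - h))) * f x := by
        gcongr ?_ * _
        · exact hf0 x
        · exact Real.exp_le_exp.2 (neg_le_neg (mul_le_mul_of_nonneg_left hn_gt.le hc))

theorem memL_tail_exp_bound_general (μ : Measure ℝ) [IsProbabilityMeasure μ] (γ : ℝ)
    (hL : MemL μ γ) :
    ∀ γ' ∈ Set.Ioo 0 γ, ∃ x₀ : ℝ, ∀ x ≥ x₀, ∀ t ≤ (-1 : ℝ),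
      tail μ (x - t) ≤ tail μ x * Real.exp (γ' * t) := by
  rintro γ' ⟨hγ'0, hγ'γ⟩
  obtain ⟨c, hγ'c, hcγ⟩ := exists_between hγ'γ
  have hc0 : 0 < c := hγ'0.trans hγ'c
  obtain ⟨h, hh, hch⟩ : ∃ h, 0 < h ∧ c * h = c - γ' :=
    ⟨(c - γ') / c, div_pos (sub_pos.2 hγ'c) hc0, by field_simp⟩
  have hq : Real.exp (-(γ * h)) < Real.exp (-(c * h)) :=
    Real.exp_lt_exp.2 (neg_lt_neg (mul_lt_mul_of_pos_right hcγ hh))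
  obtain ⟨x₀, hx₀⟩ := eventually_atTop.1 (hL.eventually_tail_add_le hq)
  refine ⟨x₀, fun x hx t ht => ?_⟩
  calc tail μ (x - t) = tail μ (x + -t) := by rw [sub_eq_add_neg]
    _ ≤ Real.exp (-(c * (-t - h))) * tail μ x :=
        (tail_antitone μ).le_exp_mul_of_add_le_exp_mul (fun y => (hL.1 y).le) hc0.le hh hx₀
          x hx (-t) (by linarith)
    _ ≤ Real.exp (γ' * t) * tail μ x := by
        gcongr ?_ * _
        · exact (hL.1 x).le
        · exact Real.exp_le_exp.2 (by nlinarith)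
    _ = tail μ x * Real.exp (γ' * t) := mul_comm _ _

theorem memL_tail_exp_bound (μ : Measure ℝ) [IsProbabilityMeasure μ] (γ : ℝ)
    (hγ : 0 < γ) (hL : MemL μ γ) :
    ∀ γ' ∈ Set.Ioo 0 γ, ∃ x₀ : ℝ, ∀ x ≥ x₀, ∀ t ≤ (-1 : ℝ),
      tail μ (x - t) ≤ tail μ x * Real.exp (γ' * t) :=
  memL_tail_exp_bound_general μ γ hL
end
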